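/- Let A be a positive semidefinite operator on a complex Hilbert space H and T an A-bounded operator. Then dw_A(T) = w_A(T) if and only if AT = 0. -/

import Mathlib

noncomputable section

namespace DW

variable {H : Type*} [NormedAddCommGroup H] [InnerProductSpace ℂ H]

/-- The semi-inner product induced by `A`: `⟨x,y⟩_A = ⟨Ax, y⟩`. -/
def innA (A : H →L[ℂ] H) (x y : H) : ℂ := inner ℂ (A x) y

/-- The seminorm induced by `A`. -/
def normA (A : H →L[ℂ] H) (x : H) : ℝ := Real.sqrt (innA A x x).re

/-- `T` is `A`-bounded. -/
def IsABounded (A T : H →L[ℂ] H) : Prop := ∃ c > 0, ∀ x, normA A (T x) ≤ c * normA A x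

/-- `S` is an `A`-adjoint of `T`. -/
def IsAAdjointPair (A T S : H →L[ℂ] H) : Prop := ∀ x y, innA A (T x) y = innA A x (S y)

/-- The `A`-operator seminorm. -/
def opNormA (A T : H →L[ℂ] H) : ℝ := sSup {r | ∃ x, normA A x = 1 ∧ r = normA A (T x)}

/-- The `A`-minimum modulus. -/
def mA (A T : H →L[ℂ] H) : ℝ := sInf {r | ∃ x, normA A x = 1 ∧ r = normA A (T x)}

/-- The `A`-numerical radius. -/
def wA (A T : H →L[ℂ] H) : ℝ :=
  sSup {r | ∃ x, normA A x = 1 ∧ r = ‖innA A (T x) x‖}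

/-- The `A`-Crawford number. -/
def cA (A T : H →L[ℂ] H) : ℝ :=
  sInf {r | ∃ x, normA A x = 1 ∧ r = ‖innA A (T x) x‖}

/-- The `A`-Davis-Wielandt radius. -/
def dwA (A T : H →L[ℂ] H) : ℝ :=
  sSup {r | ∃ x, normA A x = 1 ∧
    r = Real.sqrt (‖innA A (T x) x‖ ^ 2 + normA A (T x) ^ 4)}

/-- The semi-inner product on `H ⊕ H` induced by `𝔸 = diag(A,A)`. -/
def innA2 (A : H →L[ℂ] H) (z w : H × H) : ℂ := innA A z.1 w.1 + innA A z.2 w.2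

/-- The seminorm on `H ⊕ H` induced by `𝔸 = diag(A,A)`. -/
def normA2 (A : H →L[ℂ] H) (z : H × H) : ℝ := Real.sqrt (innA2 A z z).re

/-- The `𝔸`-numerical radius on `H ⊕ H`, `𝔸 = diag(A,A)`. -/
def wA2 (A : H →L[ℂ] H) (T : H × H →L[ℂ] H × H) : ℝ :=
  sSup {r | ∃ z, normA2 A z = 1 ∧ r = ‖innA2 A (T z) z‖}

/-- The `𝔸`-Davis-Wielandt radius on `H ⊕ H`, `𝔸 = diag(A,A)`. -/
def dwA2 (A : H →L[ℂ] H) (T : H × H →L[ℂ] H × H) : ℝ :=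
  sSup {r | ∃ z, normA2 A z = 1 ∧
    r = Real.sqrt (‖innA2 A (T z) z‖ ^ 2 + normA2 A (T z) ^ 4)}

/-- The block operator `[[0, X], [Y, 0]]` on `H ⊕ H`. -/
def offDiag (X Y : H →L[ℂ] H) : H × H →L[ℂ] H × H :=
  (X.comp (ContinuousLinearMap.snd ℂ H H)).prod (Y.comp (ContinuousLinearMap.fst ℂ H H))

end DW

/-!
Cauchy–Schwarz for `⟨·,·⟩_A` gives `|⟨Tx, x⟩_A| ≤ ‖Tx‖_A` for `‖x‖_A = 1`, and passing to the
supremum through the continuous map `r ↦ √(r² + r⁴)` yields `√(w_A(T)² + w_A(T)⁴) ≤ dw_A(T)`.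
Hence `dw_A(T) = w_A(T)` forces `w_A(T) = 0`, and then `‖Tx‖_A² ≤ dw_A(T) = 0` on the `A`-unit
sphere. Scaling, together with `A`-boundedness where `‖x‖_A = 0`, gives `‖Tx‖_A = 0` for all `x`,
and `‖y‖_A = 0` means `Ay = 0`.
-/

theorem map_csSup_le_of_forall_map_le {α β : Type*} [ConditionallyCompleteLinearOrder α]
    [TopologicalSpace α] [OrderTopology α] [TopologicalSpace β] [Preorder β]
    [ClosedIicTopology β] {s : Set α} (hne : s.Nonempty) (hbdd : BddAbove s) {f : α → β}
    (hf : Continuous f) {b : β} (h : ∀ r ∈ s, f r ≤ b) : f (sSup s) ≤ b :=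
  closure_minimal h (isClosed_Iic.preimage hf) (csSup_mem_closure hne hbdd)

namespace DW

variable {E : Type*} [NormedAddCommGroup E] [InnerProductSpace ℂ E] {A : E →L[ℂ] E}

/-- `⟨x, y⟩_A` as a pre-inner product, so that Cauchy–Schwarz can be borrowed from the core API. -/
abbrev preInnerProductCoreA (hA : A.IsPositive) : PreInnerProductSpace.Core ℂ E where
  inner := innA A
  conj_inner_symm x y := by
    rw [innA, innA, inner_conj_symm]
    exact (hA.inner_left_eq_inner_right x y).symm
  re_inner_nonneg := hA.2
  add_left x y z := by simp only [innA, map_add, inner_add_left]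
  smul_left x y r := by simp only [innA, map_smul, inner_smul_left]

theorem norm_innA_le (hA : A.IsPositive) (x y : E) :
    ‖innA A x y‖ ≤ normA A x * normA A y :=
  InnerProductSpace.Core.norm_inner_le_norm (c := preInnerProductCoreA hA) x y

theorem normA_nonneg (x : E) : 0 ≤ normA A x := Real.sqrt_nonneg _

theorem normA_smul (a : ℂ) (x : E) : normA A (a • x) = ‖a‖ * normA A x := by
  have : innA A (a • x) (a • x) = (‖a‖ ^ 2 : ℝ) * innA A x x := by
    rw [innA, innA, map_smul, inner_smul_left, inner_smul_right, ← mul_assoc,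
      Complex.conj_mul', Complex.ofReal_pow]
  rw [normA, normA, this, Complex.re_ofReal_mul, Real.sqrt_mul (by positivity),
    Real.sqrt_sq (norm_nonneg a)]

theorem apply_eq_zero_of_normA_eq_zero (hA : A.IsPositive) {x : E} (hx : normA A x = 0) :
    A x = 0 := by
  have h := norm_innA_le hA x (A x)
  rw [hx, zero_mul, norm_le_zero_iff, innA] at h
  exact inner_self_eq_zero.mp h

theorem normA_inv_smul_self {x : E} (hx : normA A x ≠ 0) :
    normA A (((normA A x)⁻¹ : ℂ) • x) = 1 := by
  rw [normA_smul, norm_inv, Complex.norm_real, Real.norm_of_nonneg (normA_nonneg x),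
    inv_mul_cancel₀ hx]

variable {T : E →L[ℂ] E}

theorem norm_innA_apply_self_le (hA : A.IsPositive) {x : E} (hx : normA A x = 1) :
    ‖innA A (T x) x‖ ≤ normA A (T x) := by
  simpa [hx] using norm_innA_le hA (T x) x

theorem wA_nonneg : 0 ≤ wA A T :=
  Real.sSup_nonneg (by rintro _ ⟨x, -, rfl⟩; exact norm_nonneg _)

namespace IsABounded

theorem normA_apply_le_of_normA_eq_one (hT : IsABounded A T) :
    ∃ c, ∀ x, normA A x = 1 → normA A (T x) ≤ c := by
  obtain ⟨c, -, hc⟩ := hT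
  exact ⟨c, fun x hx => by simpa [hx] using hc x⟩

theorem bddAbove_wA_set (hA : A.IsPositive) (hT : IsABounded A T) :
    BddAbove {r | ∃ x, normA A x = 1 ∧ r = ‖innA A (T x) x‖} := by
  obtain ⟨c, hc⟩ := hT.normA_apply_le_of_normA_eq_one
  exact ⟨c, by rintro _ ⟨x, hx, rfl⟩; exact (norm_innA_apply_self_le hA hx).trans (hc x hx)⟩

theorem bddAbove_dwA_set (hA : A.IsPositive) (hT : IsABounded A T) :
    BddAbove {r | ∃ x, normA A x = 1 ∧
      r = Real.sqrt (‖innA A (T x) x‖ ^ 2 + normA A (T x) ^ 4)} := by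
  obtain ⟨c, hc⟩ := hT.normA_apply_le_of_normA_eq_one
  refine ⟨Real.sqrt (c ^ 2 + c ^ 4), ?_⟩
  rintro _ ⟨x, hx, rfl⟩
  have hinn := (norm_innA_apply_self_le hA hx).trans (hc x hx)
  gcongr
  exacts [normA_nonneg _, hc x hx]

theorem normA_apply_eq_zero (hT : IsABounded A T)
    (h : ∀ x, normA A x = 1 → normA A (T x) = 0) (x : E) : normA A (T x) = 0 := by
  obtain ⟨c, -, hc⟩ := hT
  by_cases hx : normA A x = 0
  · exact le_antisymm (by simpa [hx] using hc x) (normA_nonneg _)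
  · have := h _ (normA_inv_smul_self hx)
    rwa [map_smul, normA_smul, mul_eq_zero, or_iff_right] at this
    simpa using hx

end IsABounded

theorem sq_normA_apply_le_dwA (hA : A.IsPositive) (hT : IsABounded A T) {x : E}
    (hx : normA A x = 1) : normA A (T x) ^ 2 ≤ dwA A T := by
  refine le_trans ?_ (le_csSup (hT.bddAbove_dwA_set hA) ⟨x, hx, rfl⟩)
  rw [Real.le_sqrt (by positivity) (by positivity)]
  nlinarith [norm_nonneg (innA A (T x) x)]

theorem sqrt_wA_sq_add_wA_pow_four_le_dwA (hA : A.IsPositive) (hT : IsABounded A T)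
    (hne : ∃ x, normA A x = 1) : Real.sqrt (wA A T ^ 2 + wA A T ^ 4) ≤ dwA A T := by
  obtain ⟨x₀, hx₀⟩ := hne
  refine map_csSup_le_of_forall_map_le (f := fun r => Real.sqrt (r ^ 2 + r ^ 4))
    ?_ (hT.bddAbove_wA_set hA) (by fun_prop) ?_
  · exact ⟨_, x₀, hx₀, rfl⟩
  rintro _ ⟨x, hx, rfl⟩
  refine le_trans ?_ (le_csSup (hT.bddAbove_dwA_set hA) ⟨x, hx, rfl⟩)
  gcongr
  exact norm_innA_apply_self_le hA hx

theorem wA_eq_zero_of_dwA_eq_wA (hA : A.IsPositive) (hT : IsABounded A T)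
    (hne : ∃ x, normA A x = 1) (h : dwA A T = wA A T) : wA A T = 0 := by
  have hle := sqrt_wA_sq_add_wA_pow_four_le_dwA hA hT hne
  rw [h, Real.sqrt_le_left wA_nonneg] at hle
  exact pow_eq_zero_iff four_ne_zero |>.mp (le_antisymm (by linarith) (by positivity))

theorem dwA_eq_wA_of_comp_eq_zero (h : A.comp T = 0) : dwA A T = wA A T := by
  have hAT (x : E) : A (T x) = 0 := DFunLike.congr_fun h x
  simp [dwA, wA, normA, innA, hAT]

end DW

open DW

variable {H : Type*} [NormedAddCommGroup H] [InnerProductSpace ℂ H] [CompleteSpace H]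

theorem stmt1 (A T : H →L[ℂ] H) (hA : A.IsPositive) (hT : IsABounded A T) :
    dwA A T = wA A T ↔ A.comp T = 0 := by
  refine ⟨fun h => ?_, dwA_eq_wA_of_comp_eq_zero⟩
  have hunit (x : H) (hx : normA A x = 1) : normA A (T x) = 0 := by
    have hle := sq_normA_apply_le_dwA hA hT hx
    rw [h, wA_eq_zero_of_dwA_eq_wA hA hT ⟨x, hx⟩ h] at hle
    exact pow_eq_zero_iff two_ne_zero |>.mp (le_antisymm hle (sq_nonneg _))
  ext x
  exact apply_eq_zero_of_normA_eq_zero hA (hT.normA_apply_eq_zero hunit x)
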